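/- Let a, d be complex numbers with d ≠ 0 and let N be a positive integer. For every integer n ≥ 4, the sum of (n−1)-st powers of the arithmetic progression a, a+d, …, a+(N−1)d satisfies ∑_{r=1}^{N} (a + (r−1)·d)^{n−1} = (1/(n·d)) · S^{n−3}_n. -/

import Mathlib

/-!
Write `P k = ∑_{r<N} (a + r d)^k`. Summing the binomial expansion of
`(a + (r+1) d)^m - (a + r d)^m` over `r < N` telescopes to
`(a + N d)^m - a^m = ∑_{k<m} C(m,k) d^(m-k) P k`. The correction terms of `S^0_n` cancel the
summands `k = 0, 1` of this identity, and the `j`-th recursion step cancels the summand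
`k = j + 1`, because `S^{j-1}_{j+2} = (j+2) d P (j+1)`. Hence `S^{n-3}_n = n d P (n-1)`.
-/

/-- The quantities `S^j_n` from the paper: `S a d N j n` is `S^j_n`. -/
noncomputable def S (a d : ℂ) (N : ℕ) : ℕ → ℕ → ℂ
  | 0, m =>
      ((m : ℂ) / 2 - 1) * (N : ℂ) * d ^ m
        - ((m : ℂ) / 2) * d ^ (m - 2) * ((a + (N : ℂ) * d) ^ 2 - a ^ 2)
        + (a + (N : ℂ) * d) ^ m - a ^ m
  | j + 1, n =>
      -(n.choose (j + 2) : ℂ) * (1 / ((j : ℂ) + 3)) * d ^ (n - j - 3)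
          * S a d N j (j + 3)
        + S a d N j n

open Finset

section BinomialTelescope

variable {R : Type*} [CommRing R]

def apPowerSum (a d : R) (N k : ℕ) : R :=
  ∑ r ∈ range N, (a + r * d) ^ k

def binomialTail (a d : R) (N j n : ℕ) : R :=
  ∑ k ∈ Ico (j + 2) n, (n.choose k : R) * d ^ (n - k) * apPowerSum a d N k

theorem apPowerSum_zero (a d : R) (N : ℕ) : apPowerSum a d N 0 = N := by
  simp [apPowerSum]

theorem add_pow_sub_pow_eq_sum (x d : R) (m : ℕ) :
    (x + d) ^ m - x ^ m = ∑ k ∈ range m, (m.choose k : R) * d ^ (m - k) * x ^ k := by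
  rw [add_pow, sum_range_succ]
  simp only [Nat.choose_self, Nat.cast_one, Nat.sub_self, pow_zero, mul_one, add_sub_cancel_right]
  exact sum_congr rfl fun k _ => by ring

theorem add_mul_pow_sub_pow_eq_sum (a d : R) (N m : ℕ) :
    (a + N * d) ^ m - a ^ m
      = ∑ k ∈ range m, (m.choose k : R) * d ^ (m - k) * apPowerSum a d N k := by
  have hstep (r : ℕ) : (a + (r + 1 : ℕ) * d) ^ m - (a + r * d) ^ m
      = ∑ k ∈ range m, (m.choose k : R) * d ^ (m - k) * (a + r * d) ^ k := by
    rw [Nat.cast_succ, add_one_mul, ← add_assoc, add_pow_sub_pow_eq_sum]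
  have htelescope := sum_range_sub (fun r : ℕ => (a + r * d) ^ m) N
  simp only [Nat.cast_zero, zero_mul, add_zero] at htelescope
  rw [← htelescope, sum_congr rfl fun r _ => hstep r, sum_comm]
  simp only [apPowerSum, mul_sum]

theorem sq_add_mul_sub_sq (a d : R) (N : ℕ) :
    (a + N * d) ^ 2 - a ^ 2 = d ^ 2 * N + 2 * d * apPowerSum a d N 1 := by
  rw [add_mul_pow_sub_pow_eq_sum, sum_range_succ, sum_range_one, apPowerSum_zero]
  norm_num

theorem binomialTail_self_add_three (a d : R) (N j : ℕ) :
    binomialTail a d N j (j + 3) = (j + 3) * d * apPowerSum a d N (j + 2) := by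
  rw [binomialTail, Nat.Ico_succ_singleton, sum_singleton, Nat.choose_succ_self_right,
    show j + 3 - (j + 2) = 1 by omega, pow_one]
  push_cast
  ring

theorem binomialTail_eq_add {a d : R} {N j n : ℕ} (h : j + 2 < n) :
    binomialTail a d N j n
      = (n.choose (j + 2) : R) * d ^ (n - (j + 2)) * apPowerSum a d N (j + 2)
        + binomialTail a d N (j + 1) n :=
  sum_eq_sum_Ico_succ_bot h _

end BinomialTelescope

section S

variable {a d : ℂ} {N : ℕ}

theorem S_zero_eq_binomialTail {m : ℕ} (hm : 2 ≤ m) : S a d N 0 m = binomialTail a d N 0 m := by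
  obtain ⟨m, rfl⟩ : ∃ k, m = k + 2 := ⟨m - 2, by omega⟩
  have hexpand := add_mul_pow_sub_pow_eq_sum a d N (m + 2)
  rw [range_eq_Ico, sum_eq_sum_Ico_succ_bot (by omega), sum_eq_sum_Ico_succ_bot (by omega)]
    at hexpand
  simp only [zero_add, Nat.choose_zero_right, Nat.choose_one_right, apPowerSum_zero,
    show m + 2 - 1 = m + 1 by omega] at hexpand
  rw [S, sq_add_mul_sub_sq, Nat.add_sub_cancel, binomialTail]
  push_cast at hexpand ⊢
  linear_combination hexpand

theorem S_eq_binomialTail {j n : ℕ} (h : j + 2 ≤ n) : S a d N j n = binomialTail a d N j n := by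
  induction j generalizing n with
  | zero => exact S_zero_eq_binomialTail h
  | succ j ih =>
    have hj3 : ((j : ℂ) + 3) ≠ 0 := by exact_mod_cast (by omega : j + 3 ≠ 0)
    have hpow : d ^ (n - j - 3) * d = d ^ (n - (j + 2)) := by
      rw [← pow_succ]; congr 1; omega
    rw [S, ih (by omega), ih (by omega), binomialTail_self_add_three,
      binomialTail_eq_add (by omega), ← hpow]
    field_simp
    ring

end S

theorem sum_powers_eq_S_general
    (a d : ℂ) (hd : d ≠ 0) (N : ℕ) (n : ℕ) (hn : 4 ≤ n) :
    ∑ r ∈ Finset.range N, (a + (r : ℂ) * d) ^ (n - 1) =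
      (1 / ((n : ℂ) * d)) * S a d N (n - 3) n := by
  obtain ⟨j, rfl⟩ : ∃ j, n = j + 3 := ⟨n - 3, by omega⟩
  have hj3 : ((j : ℂ) + 3) ≠ 0 := by exact_mod_cast (by omega : j + 3 ≠ 0)
  rw [Nat.add_sub_cancel, S_eq_binomialTail (by omega), binomialTail_self_add_three]
  push_cast
  field_simp
  rfl

theorem sum_powers_eq_S
    (a d : ℂ) (hd : d ≠ 0) (N : ℕ) (hN : 0 < N) (n : ℕ) (hn : 4 ≤ n) :
    ∑ r ∈ Finset.range N, (a + (r : ℂ) * d) ^ (n - 1) =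
      (1 / ((n : ℂ) * d)) * S a d N (n - 3) n :=
  sum_powers_eq_S_general a d hd N n hn
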